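/- arXiv:2202.03067 — 4 statements merged into one kernel-verified Lean document; each statement's English description precedes it below -/
import Mathlib

section
/- Let σ: Ω¹⊗_A Ω¹ → Ω¹⊗_A Ω¹ be a bimodule map and define [2,σ] = id + σ on Ω¹⊗_A Ω¹, and on Ω¹⊗_A Ω¹⊗_A Ω¹ define [3,σ] = id + σ₂ + σ₁σ₂ and [3,σ]' = id + σ₁ + σ₂σ₁ (where σᵢ applies σ in tensor positions i,i+1). Then [3,σ]∘([2,σ]⊗id) = [3,σ]'∘(id⊗[2,σ]) holds if and only if σ satisfies the braid relation σ₁σ₂σ₁ = σ₂σ₁σ₂. -/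
/-- **Braided integers and the braid relation.**
Let `σ` be an (additive) bimodule endomorphism of `Ω¹⊗_AΩ¹`, with `σ₁ = σ⊗id`
and `σ₂ = id⊗σ` the induced endomorphisms of `T3 = Ω¹⊗_AΩ¹⊗_AΩ¹`.
With `[2,σ] = id + σ`, `[3,σ] = id + σ₂ + σ₁σ₂` and `[3,σ]' = id + σ₁ + σ₂σ₁`,
the identity `[3,σ]∘([2,σ]⊗id) = [3,σ]'∘(id⊗[2,σ])` holds if and only if `σ`
satisfies the braid relation `σ₁σ₂σ₁ = σ₂σ₁σ₂`. -/
theorem braided_integer_identity_iff_braid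
    {T3 : Type*} [AddCommGroup T3] (sig1 sig2 : T3 →+ T3) :
    (∀ x : T3,
        ((x + sig1 x) + sig2 (x + sig1 x) + sig1 (sig2 (x + sig1 x)))
          = ((x + sig2 x) + sig1 (x + sig2 x) + sig2 (sig1 (x + sig2 x))))
      ↔ ∀ x : T3, sig1 (sig2 (sig1 x)) = sig2 (sig1 (sig2 x)) := by
  constructor <;> intro h x <;> have hx := h x <;>
    simp only [map_add] at hx ⊢ <;> rw [← sub_eq_zero] at hx ⊢ <;>
    abel_nf at hx ⊢ <;> exact hx
end

section
/- Let V be a module (or object in a monoidal category of bimodules) with an endomorphism σ of V⊗V satisfying the braid relations on V⊗V⊗V. Define the braided binomials [n choose k, σ]: V^⊗n → V^⊗n recursively by [n choose 0,σ] = [n choose n,σ] = id and [n choose k,σ] = (id⊗[n-1 choose k-1,σ])σ₁⋯σ_{n-k} + (id⊗[n-1 choose k,σ]). Then for all n ≥ k ≥ m: [n choose k,σ]∘(id^{n-k}⊗[k choose m,σ]) = [n choose m,σ]∘([n-m choose k-m,σ]⊗id^m). -/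
/-- Abstract model of the tower of tensor powers `V^⊗n` of an `A`-bimodule `V`
(tensor products over `A`), equipped with maps `sig n i` modelling the braiding
`σ` acting in tensor positions `i+1, i+2` (1-indexed), and operators
`padL`/`padR` modelling `id ⊗ f` and `f ⊗ id`.  The structure fields record the
evident compatibilities that hold in the genuine tensor-power model. -/
structure BraidTower where
  T : ℕ → Type*
  acg : ∀ n, AddCommGroup (T n)
  sig : (n : ℕ) → ℕ → (T n →+ T n)
  padL : ∀ {m m' : ℕ}, (T m →+ T m') → (T (m + 1) →+ T (m' + 1))
  padR : ∀ {m m' : ℕ}, (T m →+ T m') → (T (m + 1) →+ T (m' + 1))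
  padL_id : ∀ n, padL (AddMonoidHom.id (T n)) = AddMonoidHom.id (T (n + 1))
  padR_id : ∀ n, padR (AddMonoidHom.id (T n)) = AddMonoidHom.id (T (n + 1))
  padL_comp : ∀ {a b c : ℕ} (f : T a →+ T b) (g : T b →+ T c),
    padL (g.comp f) = (padL g).comp (padL f)
  padR_comp : ∀ {a b c : ℕ} (f : T a →+ T b) (g : T b →+ T c),
    padR (g.comp f) = (padR g).comp (padR f)
  padL_add : ∀ {a b : ℕ} (f g : T a →+ T b), padL (f + g) = padL f + padL g
  padR_add : ∀ {a b : ℕ} (f g : T a →+ T b), padR (f + g) = padR f + padR g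
  padLR : ∀ {a b : ℕ} (f : T a →+ T b), padL (padR f) = padR (padL f)
  padL_sig : ∀ n i, padL (sig n i) = sig (n + 1) (i + 1)
  padR_sig : ∀ n i, padR (sig n i) = sig (n + 1) i
  sig_comm : ∀ n i j, i + 1 < j →
    (sig n i).comp (sig n j) = (sig n j).comp (sig n i)

attribute [instance] BraidTower.acg

namespace BraidTower

variable (D : BraidTower)

/-- The braid (Yang–Baxter) relations for `σ`. -/
def Braided : Prop :=
  ∀ n i, (D.sig n i).comp ((D.sig n (i + 1)).comp (D.sig n i))
    = (D.sig n (i + 1)).comp ((D.sig n i).comp (D.sig n (i + 1)))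

/-- Transport an element along an equality of degrees. -/
def castT {n n' : ℕ} (h : n = n') (x : D.T n) : D.T n' := h ▸ x

/-- Transport a morphism along equalities of degrees. -/
def castHom {a b a' b' : ℕ} (h1 : a = a') (h2 : b = b')
    (f : D.T a →+ D.T b) : D.T a' →+ D.T b' := by
  subst h1; subst h2; exact f

/-- Transport an endomorphism along an equality of degrees. -/
def castEndo {n n' : ℕ} (h : n = n') (f : D.T n →+ D.T n) :
    D.T n' →+ D.T n' := by subst h; exact f

/-- `σ₁ σ₂ ⋯ σ_m` (composition, with `σ_m` applied first). -/
def chain (n : ℕ) : ℕ → (D.T n →+ D.T n)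
  | 0 => AddMonoidHom.id _
  | m + 1 => (chain n m).comp (D.sig n m)

/-- The braided binomial `[n choose k, σ]`, defined by the recursion
`[n choose k, σ] = (id ⊗ [n-1 choose k-1, σ]) σ₁⋯σ_{n-k} + (id ⊗ [n-1 choose k, σ])`
with `[n choose 0, σ] = [n choose n, σ] = id`. -/
def binom : (n : ℕ) → ℕ → (D.T n →+ D.T n)
  | _, 0 => AddMonoidHom.id _
  | 0, _ + 1 => AddMonoidHom.id _
  | n + 1, k + 1 =>
    if k = n then AddMonoidHom.id _
    else ((D.padL (binom n k)).comp (chain D (n + 1) (n - k))) + D.padL (binom n (k + 1))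

/-- `id^{⊗j} ⊗ f` (pad on the left `j` times). -/
def padLs {a b : ℕ} (f : D.T a →+ D.T b) : (j : ℕ) → (D.T (a + j) →+ D.T (b + j))
  | 0 => f
  | j + 1 => D.padL (padLs f j)

/-- `f ⊗ id^{⊗j}` (pad on the right `j` times). -/
def padRs {a b : ℕ} (f : D.T a →+ D.T b) : (j : ℕ) → (D.T (a + j) →+ D.T (b + j))
  | 0 => f
  | j + 1 => D.padR (padRs f j)

/-- The braided factorial `[n,σ]! = [n,σ] ∘ ([n-1,σ]! ⊗ id)`, where
`[n,σ] = [n choose 1, σ]` is the braided integer. -/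
def bfact : (n : ℕ) → (D.T n →+ D.T n)
  | 0 => AddMonoidHom.id _
  | n + 1 => (binom D (n + 1) 1).comp (D.padR (bfact n))

end BraidTower

/-!
Induction on `n`. Unfolding the recursion once on each side (with `m, p, q ≥ 1`) writes both
sides as three terms of the form `(id ⊗ X) ∘ σ₁ ⋯ σₜ`, and the three `X` are matched by the
induction hypothesis. Bringing the left side into that form uses that `σ₁ ⋯ σₜ` commutes with
anything padded on the left by more than `t` strands; the right side needs the braid relations,
through `σ₁ ⋯ σₐ ∘ (f ⊗ id) = (id ⊗ f) ∘ σ₁ ⋯ σₐ` for every `f` in the algebra generated by the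
braidings on `V^⊗a`.
-/

namespace BraidTower

variable {D : BraidTower}

variable (D) in
/-- `id^{⊗j} ⊗ f` at any degree `n` provably equal to `a + j`: carrying the equation as an
argument keeps transports out of the statements below. -/
def lpad (j : ℕ) {a n : ℕ} (h : a + j = n) (f : D.T a →+ D.T a) : D.T n →+ D.T n :=
  D.castEndo h (padLs D f j)

variable (D) in
def rpad (j : ℕ) {a n : ℕ} (h : a + j = n) (f : D.T a →+ D.T a) : D.T n →+ D.T n :=
  D.castEndo h (padRs D f j)

structure IsEndHom {a b : ℕ} (φ : (D.T a →+ D.T a) → (D.T b →+ D.T b)) : Prop where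
  map_id : φ (AddMonoidHom.id _) = AddMonoidHom.id _
  map_comp : ∀ f g, φ (f.comp g) = (φ f).comp (φ g)
  map_add : ∀ f g, φ (f + g) = φ f + φ g

theorem IsEndHom.comp {a b c : ℕ} {ψ : (D.T b →+ D.T b) → (D.T c →+ D.T c)}
    {φ : (D.T a →+ D.T a) → (D.T b →+ D.T b)} (hψ : IsEndHom ψ) (hφ : IsEndHom φ) :
    IsEndHom (ψ ∘ φ) where
  map_id := by simp only [Function.comp_apply, hφ.map_id, hψ.map_id]
  map_comp f g := by simp only [Function.comp_apply, hφ.map_comp, hψ.map_comp]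
  map_add f g := by simp only [Function.comp_apply, hφ.map_add, hψ.map_add]

theorem isEndHom_padL (a : ℕ) : IsEndHom (D.padL (m := a) (m' := a)) :=
  ⟨D.padL_id a, fun f g => D.padL_comp g f, D.padL_add⟩

theorem isEndHom_padR (a : ℕ) : IsEndHom (D.padR (m := a) (m' := a)) :=
  ⟨D.padR_id a, fun f g => D.padR_comp g f, D.padR_add⟩

theorem isEndHom_castEndo {a b : ℕ} (h : a = b) : IsEndHom (D.castEndo h) := by
  subst h
  exact ⟨rfl, fun _ _ => rfl, fun _ _ => rfl⟩

theorem isEndHom_lpad (j : ℕ) {a n : ℕ} (h : a + j = n) : IsEndHom (D.lpad j h) := by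
  subst h
  induction j with
  | zero => exact isEndHom_castEndo rfl
  | succ j ih => exact (isEndHom_padL (a + j)).comp ih

theorem isEndHom_rpad (j : ℕ) {a n : ℕ} (h : a + j = n) : IsEndHom (D.rpad j h) := by
  subst h
  induction j with
  | zero => exact isEndHom_castEndo rfl
  | succ j ih => exact (isEndHom_padR (a + j)).comp ih

theorem castEndo_binom {a b : ℕ} (h : a = b) (k : ℕ) :
    D.castEndo h (binom D a k) = binom D b k := by
  subst h
  rfl

theorem lpad_sig (j : ℕ) {a n : ℕ} (h : a + j = n) (i : ℕ) :
    D.lpad j h (D.sig a i) = D.sig n (i + j) := by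
  subst h
  induction j with
  | zero => rfl
  | succ j ih => exact (congrArg D.padL ih).trans (D.padL_sig _ _)

theorem rpad_sig (j : ℕ) {a n : ℕ} (h : a + j = n) (i : ℕ) :
    D.rpad j h (D.sig a i) = D.sig n i := by
  subst h
  induction j with
  | zero => rfl
  | succ j ih => exact (congrArg D.padR ih).trans (D.padR_sig _ _)

theorem lpad_succ {j a n : ℕ} (h : a + (j + 1) = n + 1) (f : D.T a →+ D.T a) :
    D.lpad (j + 1) h f = D.padL (D.lpad j (by omega) f) := by
  obtain rfl : a + j = n := by omega
  rfl

theorem rpad_succ {j a n : ℕ} (h : a + (j + 1) = n + 1) (f : D.T a →+ D.T a) :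
    D.rpad (j + 1) h f = D.padR (D.rpad j (by omega) f) := by
  obtain rfl : a + j = n := by omega
  rfl

theorem lpad_padL {j a n : ℕ} (h : a + 1 + j = n) (f : D.T a →+ D.T a) :
    D.lpad j h (D.padL f) = D.lpad (j + 1) (by omega) f := by
  induction j generalizing n with
  | zero => subst h; rfl
  | succ j ih =>
    obtain ⟨n, rfl⟩ : ∃ n', n = n' + 1 := ⟨n - 1, by omega⟩
    rw [lpad_succ, ih (by omega), lpad_succ]

theorem rpad_padL {j a n : ℕ} (h : a + 1 + j = n + 1) (f : D.T a →+ D.T a) :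
    D.rpad j h (D.padL f) = D.padL (D.rpad j (by omega) f) := by
  induction j generalizing n with
  | zero =>
    obtain rfl : a = n := by omega
    rfl
  | succ j ih =>
    obtain ⟨n, rfl⟩ : ∃ n', n = n' + 1 := ⟨n - 1, by omega⟩
    rw [rpad_succ, ih (by omega), ← D.padLR, rpad_succ]

theorem rpad_chain (j : ℕ) {a n : ℕ} (h : a + j = n) (t : ℕ) :
    D.rpad j h (chain D a t) = chain D n t := by
  induction t with
  | zero => exact (isEndHom_rpad j h).map_id
  | succ t ih => rw [chain, (isEndHom_rpad j h).map_comp, ih, rpad_sig, chain]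

theorem chain_add (j : ℕ) {a n : ℕ} (h : a + j = n) (t : ℕ) :
    chain D n (j + t) = (chain D n j).comp (D.lpad j h (chain D a t)) := by
  induction t with
  | zero => rw [chain, (isEndHom_lpad j h).map_id, AddMonoidHom.comp_id]; rfl
  | succ t ih =>
    rw [← add_assoc, chain, ih, chain, (isEndHom_lpad j h).map_comp, lpad_sig,
      AddMonoidHom.comp_assoc, add_comm t j]

theorem chain_comp_comm {n t : ℕ} {g : D.T n →+ D.T n}
    (hg : ∀ i < t, (D.sig n i).comp g = g.comp (D.sig n i)) :
    (chain D n t).comp g = g.comp (chain D n t) := by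
  induction t with
  | zero => rfl
  | succ t ih =>
    rw [chain, AddMonoidHom.comp_assoc, hg t (by omega), ← AddMonoidHom.comp_assoc,
      ih fun i hi => hg i (by omega), AddMonoidHom.comp_assoc]

theorem chain_comp_sig (hbraid : D.Braided) {n i j : ℕ} (hij : i + 2 ≤ j) :
    (chain D n j).comp (D.sig n i) = (D.sig n (i + 1)).comp (chain D n j) := by
  induction j, hij using Nat.le_induction with
  | base =>
    have hcomm : (chain D n i).comp (D.sig n (i + 1)) = (D.sig n (i + 1)).comp (chain D n i) :=
      chain_comp_comm fun i' hi' => D.sig_comm n i' (i + 1) (by omega)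
    simp only [chain, AddMonoidHom.comp_assoc]
    rw [hbraid n i, ← AddMonoidHom.comp_assoc _ _ (chain D n i), hcomm, AddMonoidHom.comp_assoc]
  | succ j hj ih =>
    rw [chain, AddMonoidHom.comp_assoc, ← D.sig_comm n i j (by omega), ← AddMonoidHom.comp_assoc,
      ih, AddMonoidHom.comp_assoc]

variable (D) in
inductive IsBraidPoly (a : ℕ) : (D.T a →+ D.T a) → Prop
  | id : IsBraidPoly a (AddMonoidHom.id _)
  | sig {i : ℕ} : i + 2 ≤ a → IsBraidPoly a (D.sig a i)
  | comp {f g : D.T a →+ D.T a} : IsBraidPoly a f → IsBraidPoly a g → IsBraidPoly a (f.comp g)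
  | add {f g : D.T a →+ D.T a} : IsBraidPoly a f → IsBraidPoly a g → IsBraidPoly a (f + g)

theorem IsBraidPoly.padL {a : ℕ} {f : D.T a →+ D.T a} (hf : IsBraidPoly D a f) :
    IsBraidPoly D (a + 1) (D.padL f) := by
  induction hf with
  | id => rw [D.padL_id]; exact .id
  | sig hi => rw [D.padL_sig]; exact .sig (by omega)
  | comp _ _ ihf ihg => rw [D.padL_comp]; exact ihf.comp ihg
  | add _ _ ihf ihg => rw [D.padL_add]; exact ihf.add ihg

theorem isBraidPoly_chain {a t : ℕ} (ht : t + 1 ≤ a) : IsBraidPoly D a (chain D a t) := by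
  induction t with
  | zero => exact .id
  | succ t ih => exact (ih (by omega)).comp (.sig ht)

theorem isBraidPoly_binom (n k : ℕ) : IsBraidPoly D n (binom D n k) := by
  induction n generalizing k with
  | zero => cases k <;> exact .id
  | succ n ih =>
    cases k with
    | zero => exact .id
    | succ k =>
      rw [binom]
      split_ifs
      · exact .id
      · exact (((ih k).padL).comp (isBraidPoly_chain (by omega))).add (ih (k + 1)).padL

theorem IsBraidPoly.comp_map_eq_map_comp {a n : ℕ}
    {φ ψ : (D.T a →+ D.T a) → (D.T n →+ D.T n)} (hφ : IsEndHom φ) (hψ : IsEndHom ψ)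
    (c : D.T n →+ D.T n) (hsig : ∀ i, i + 2 ≤ a → c.comp (φ (D.sig a i)) = (ψ (D.sig a i)).comp c)
    {f : D.T a →+ D.T a} (hf : IsBraidPoly D a f) : c.comp (φ f) = (ψ f).comp c := by
  induction hf with
  | id => rw [hφ.map_id, hψ.map_id, AddMonoidHom.comp_id, AddMonoidHom.id_comp]
  | sig hi => exact hsig _ hi
  | comp _ _ ihf ihg =>
    rw [hφ.map_comp, hψ.map_comp, ← AddMonoidHom.comp_assoc, ihf, AddMonoidHom.comp_assoc, ihg,
      AddMonoidHom.comp_assoc]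
  | add _ _ ihf ihg =>
    rw [hφ.map_add, hψ.map_add, AddMonoidHom.comp_add, AddMonoidHom.add_comp, ihf, ihg]

theorem chain_comp_lpad_comm {a j n t : ℕ} (h : a + j = n) (ht : t + 1 ≤ j)
    {f : D.T a →+ D.T a} (hf : IsBraidPoly D a f) :
    (chain D n t).comp (D.lpad j h f) = (D.lpad j h f).comp (chain D n t) :=
  chain_comp_comm fun i hi =>
    hf.comp_map_eq_map_comp (isEndHom_lpad j h) (isEndHom_lpad j h) _ fun i' _ => by
      rw [lpad_sig]
      exact D.sig_comm n i (i' + j) (by omega)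

theorem chain_comp_rpad (hbraid : D.Braided) {a e n : ℕ} (h : a + (e + 1) = n + 1)
    {f : D.T a →+ D.T a} (hf : IsBraidPoly D a f) :
    (chain D (n + 1) a).comp (D.rpad (e + 1) h f)
      = (D.padL (D.rpad e (by omega) f)).comp (chain D (n + 1) a) :=
  hf.comp_map_eq_map_comp (isEndHom_rpad _ h) ((isEndHom_padL n).comp (isEndHom_rpad e _)) _
    fun i hi => by
      simp only [Function.comp_apply, rpad_sig, D.padL_sig]
      exact chain_comp_sig hbraid hi

theorem binom_self (n : ℕ) : binom D n n = AddMonoidHom.id _ := by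
  cases n with
  | zero => rfl
  | succ n => rw [binom, if_pos rfl]

theorem binom_zero (n : ℕ) : binom D n 0 = AddMonoidHom.id _ := by
  cases n <;> rfl

theorem binom_succ_succ {n k q : ℕ} (h : k + (q + 1) = n) :
    binom D (n + 1) (k + 1)
      = (D.padL (binom D n k)).comp (chain D (n + 1) (q + 1)) + D.padL (binom D n (k + 1)) := by
  rw [binom, if_neg (by omega), show n - k = q + 1 by omega]

theorem binom_comp_lpad_succ {n k m p q : ℕ} (hk : k + 1 + (q + 1) = n + 1)
    (hm : m + 1 + p = k) :
    (binom D (n + 1) (k + 1)).comp (D.lpad (q + 1) hk (binom D (k + 1) (m + 1)))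
      = (D.padL ((binom D n k).comp (D.lpad (q + 1) (by omega) (binom D k m)))).comp
            (chain D (n + 1) (q + 1 + (p + 1)))
        + (D.padL ((binom D n k).comp (D.lpad (q + 1) (by omega) (binom D k (m + 1))))).comp
            (chain D (n + 1) (q + 1))
        + D.padL ((binom D n (k + 1)).comp (D.lpad q (by omega) (binom D (k + 1) (m + 1)))) := by
  have hL := isEndHom_lpad (D := D) (q + 1) hk
  have hsplit : D.lpad (q + 1) hk (binom D (k + 1) (m + 1))
      = (D.lpad (q + 1 + 1) (by omega) (binom D k m)).comp
          (D.lpad (q + 1) hk (chain D (k + 1) (p + 1)))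
        + D.lpad (q + 1 + 1) (by omega) (binom D k (m + 1)) := by
    rw [binom_succ_succ (by omega : m + (p + 1) = k), hL.map_add, hL.map_comp, lpad_padL,
      lpad_padL]
  have hcomm (x : D.T k →+ D.T k) (hx : IsBraidPoly D k x) :
      (chain D (n + 1) (q + 1)).comp (D.lpad (q + 1 + 1) (by omega) x)
        = (D.lpad (q + 1 + 1) (by omega) x).comp (chain D (n + 1) (q + 1)) :=
    chain_comp_lpad_comm _ (by omega) hx
  rw [binom_succ_succ (show k + (q + 1) = n by omega), AddMonoidHom.add_comp]
  congr 1
  · rw [hsplit, AddMonoidHom.comp_assoc, AddMonoidHom.comp_add, AddMonoidHom.comp_add,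
      ← AddMonoidHom.comp_assoc _ _ (chain D (n + 1) (q + 1)), hcomm _ (isBraidPoly_binom _ _),
      hcomm _ (isBraidPoly_binom _ _), AddMonoidHom.comp_assoc, ← chain_add,
      lpad_succ, lpad_succ (j := q + 1), ← AddMonoidHom.comp_assoc, ← D.padL_comp,
      ← AddMonoidHom.comp_assoc, ← D.padL_comp]
  · rw [lpad_succ, ← D.padL_comp]

theorem binom_comp_rpad_succ (hbraid : D.Braided) {n m p q r : ℕ}
    (hr : r + 1 + (m + 1) = n + 1) (hq : p + 1 + q = r) :
    (binom D (n + 1) (m + 1)).comp (D.rpad (m + 1) hr (binom D (r + 1) (p + 1)))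
      = (D.padL ((binom D n m).comp (D.rpad m (by omega) (binom D (r + 1) (p + 1))))).comp
            (chain D (n + 1) (r + 1))
        + (D.padL ((binom D n (m + 1)).comp (D.rpad (m + 1) (by omega) (binom D r p)))).comp
            (chain D (n + 1) (q + 1))
        + D.padL ((binom D n (m + 1)).comp (D.rpad (m + 1) (by omega) (binom D r (p + 1)))) := by
  have hR := isEndHom_rpad (D := D) (m + 1) hr
  rw [binom_succ_succ (show m + (r + 1) = n by omega), AddMonoidHom.add_comp, add_assoc]
  congr 1
  · rw [AddMonoidHom.comp_assoc, chain_comp_rpad hbraid hr (isBraidPoly_binom _ _),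
      ← AddMonoidHom.comp_assoc, ← D.padL_comp]
  · rw [binom_succ_succ (show p + (q + 1) = r by omega), hR.map_add, hR.map_comp, rpad_padL,
      rpad_chain, rpad_padL, AddMonoidHom.comp_add, ← AddMonoidHom.comp_assoc, ← D.padL_comp,
      ← D.padL_comp]

theorem binom_comp_lpad_binom (hbraid : D.Braided) (n : ℕ) :
    ∀ {m p q k r : ℕ} (hk : k + q = n) (hr : r + m = n), m + p = k → p + q = r →
      (binom D n k).comp (D.lpad q hk (binom D k m))
        = (binom D n m).comp (D.rpad m hr (binom D r p)) := by
  induction n with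
  | zero =>
    intro m p q k r hk hr hmp hpq
    obtain ⟨rfl, rfl, rfl, rfl, rfl⟩ : m = 0 ∧ p = 0 ∧ q = 0 ∧ k = 0 ∧ r = 0 := by omega
    rfl
  | succ n ih =>
    intro m p q k r hk hr hmp hpq
    rcases q with _ | q
    · obtain rfl : k = n + 1 := hk
      obtain rfl : r = p := hpq.symm
      rw [binom_self, binom_self, (isEndHom_rpad m hr).map_id, AddMonoidHom.id_comp,
        AddMonoidHom.comp_id]
      exact castEndo_binom _ _
    rcases p with _ | p
    · obtain rfl : k = m := hmp.symm
      rw [binom_self, binom_zero, (isEndHom_lpad _ _).map_id, (isEndHom_rpad _ _).map_id]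
    rcases m with _ | m
    · obtain rfl : k = p + 1 := by omega
      rw [binom_zero, binom_zero, (isEndHom_lpad _ hk).map_id, AddMonoidHom.comp_id,
        AddMonoidHom.id_comp]
      exact (castEndo_binom hr (p + 1)).symm
    obtain ⟨k, rfl⟩ : ∃ k', k = k' + 1 := ⟨k - 1, by omega⟩
    obtain ⟨r, rfl⟩ : ∃ r', r = r' + 1 := ⟨r - 1, by omega⟩
    rw [binom_comp_lpad_succ hk (by omega : m + 1 + p = k),
      binom_comp_rpad_succ hbraid hr (by omega : p + 1 + q = r),
      ih (m := m) (p := p + 1) (r := r + 1) (by omega) (by omega) (by omega) (by omega),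
      ih (m := m + 1) (p := p) (r := r) (by omega) (by omega) (by omega) (by omega),
      ih (m := m + 1) (p := p + 1) (r := r) (by omega) (by omega) (by omega) (by omega),
      show q + 1 + (p + 1) = r + 1 by omega]

end BraidTower

open BraidTower in
/-- **Composition rule for braided binomials.**
If `σ` satisfies the braid relations then for all `n ≥ k ≥ m` (here written
`n = m + p + q`, `k = m + p`):
`[n choose k, σ] ∘ (id^{⊗(n-k)} ⊗ [k choose m, σ])
  = [n choose m, σ] ∘ ([n-m choose k-m, σ] ⊗ id^{⊗m})`. -/
theorem braided_binomial_composition (D : BraidTower) (hbraid : D.Braided)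
    (m p q : ℕ) :
    (binom D (m + p + q) (m + p)).comp (padLs D (binom D (m + p) m) q)
      = (binom D (m + p + q) m).comp
          (castEndo D (show (p + q) + m = m + p + q by omega)
            (padRs D (binom D (p + q) p) m)) :=
  binom_comp_lpad_binom hbraid (m + p + q) rfl _ rfl rfl
end

section
/- Let ∇ be a bimodule connection on Ω¹ with braiding σ, and suppose the Leibniz-compatibility condition ∇₂σ₁ = σ₂∇₂ holds (where ∇₂ = ∇⊗id + σ₁(id⊗∇)). Then the third-order Leibniz rule holds for all a,b ∈ A: ∇₂∇d(ab) = (∇₂∇da)b + [3,σ](∇da⊗db) + [3,σ]'(da⊗∇db) + a(∇₂∇db), where [3,σ] = id + σ₂ + σ₁σ₂ and [3,σ]' = id + σ₁ + σ₂σ₁. -/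
/-- **Third-order Leibniz rule (Lemma 3.5 of the paper, "if" direction).**
Let `∇` be a bimodule connection on `Ω¹` with braiding `σ` and suppose the
Leibniz-compatibility `∇₂σ₁ = σ₂∇₂` holds, where `∇₂ = ∇⊗id + σ₁(id⊗∇)` is the
tensor product connection.  Then for all `a, b ∈ A`:
`∇₂∇d(ab) = (∇₂∇da)b + [3,σ](∇da ⊗ db) + [3,σ]'(da ⊗ ∇db) + a(∇₂∇db)`,
where `[3,σ] = id + σ₂ + σ₁σ₂` and `[3,σ]' = id + σ₁ + σ₂σ₁`.
Here `T2, T3` model `Ω¹^{⊗2}, Ω¹^{⊗3}`, with `t23 x ζ = x ⊗ ζ` and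
`t32 ω y = ω ⊗ y`. -/
theorem third_order_leibniz
    {A Ω1 T2 T3 : Type*} [Ring A]
    [AddCommGroup Ω1] [AddCommGroup T2] [AddCommGroup T3]
    (smulL : A → Ω1 → Ω1) (smulR : Ω1 → A → Ω1)
    (smulL2 : A → T2 → T2) (smulR2 : T2 → A → T2)
    (smulL3 : A → T3 → T3) (smulR3 : T3 → A → T3)
    (tensor : Ω1 → Ω1 → T2)
    (t23 : T2 → Ω1 → T3) (t32 : Ω1 → T2 → T3)
    (d : A → Ω1)
    (nab : Ω1 → T2) (sig : T2 →+ T2)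
    (sig1 sig2 : T3 →+ T3)
    (hsig1 : ∀ x ζ, sig1 (t23 x ζ) = t23 (sig x) ζ)
    (hsig2 : ∀ ω y, sig2 (t32 ω y) = t32 ω (sig y))
    -- `d` is a derivation
    (hd : ∀ a b, d (a * b) = smulL a (d b) + smulR (d a) b)
    -- `∇` is an additive bimodule connection with braiding `σ`
    (hnab_add : ∀ x y : Ω1, nab (x + y) = nab x + nab y)
    (hnabL : ∀ a ω, nab (smulL a ω) = tensor (d a) ω + smulL2 a (nab ω))
    (hnabR : ∀ ω a, nab (smulR ω a) = smulR2 (nab ω) a + sig (tensor ω (d a)))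
    -- `∇₂` is the tensor product bimodule connection, with braiding `σ₁σ₂`
    (nab2 : T2 →+ T3)
    (hnab2 : ∀ ω η, nab2 (tensor ω η) = t23 (nab ω) η + sig1 (t32 ω (nab η)))
    (hnab2L : ∀ a x, nab2 (smulL2 a x) = t32 (d a) x + smulL3 a (nab2 x))
    (hnab2R : ∀ x a, nab2 (smulR2 x a) = smulR3 (nab2 x) a + sig1 (sig2 (t23 x (d a))))
    -- Leibniz compatibility `∇₂σ₁ = σ₂∇₂`
    (hLC : ∀ x : T2, nab2 (sig x) = sig2 (nab2 x)) :
    ∀ a b : A,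
      nab2 (nab (d (a * b)))
        = smulR3 (nab2 (nab (d a))) b
          + (t23 (nab (d a)) (d b) + sig2 (t23 (nab (d a)) (d b))
              + sig1 (sig2 (t23 (nab (d a)) (d b))))
          + (t32 (d a) (nab (d b)) + sig1 (t32 (d a) (nab (d b)))
              + sig2 (sig1 (t32 (d a) (nab (d b)))))
          + smulL3 a (nab2 (nab (d b))) := by
  intro a b
  rw [hd a b, hnab_add, hnabL, hnabR, map_add, map_add, map_add,
      hnab2, hnab2L, hnab2R, hLC, hnab2, map_add]
  abel
end

section
/- Let E be an A-bimodule and σ_E: E⊗_A Ω¹ → Ω¹⊗_A E a bimodule map. Define on J¹_E = E ⊕ (Ω¹⊗_A E) the actions a•(s, ω⊗e) = (as, da⊗s + a(ω⊗e)) and (s, ω⊗e)•a = (sa, σ_E(s⊗da) + (ω⊗e)a). Then J¹_E is an A-bimodule, and bimodule splittings j: E → J¹_E of the projection J¹_E → E are in bijection with bimodule connections ∇_E on E whose generalised braiding is σ_E, via j(s) = (s, ∇_E s). -/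
/-- **The first-order jet bimodule `J¹_E` and the Atiyah sequence
(Proposition 4.1).**
Let `E` be an `A`-bimodule and `σ_E : E⊗_AΩ¹ → Ω¹⊗_AE` a bimodule map.  On
`J¹_E = E ⊕ (Ω¹⊗_AE)` define
`a • (s, t) = (as, da⊗s + a·t)` and `(s, t) • a = (sa, σ_E(s⊗da) + t·a)`.
Then:
1. these actions make `J¹_E` an `A`-bimodule, and the projection
   `π : J¹_E → E`, `π(s,t) = s`, is a surjective bimodule map whose kernel is
   `Ω¹⊗_AE` (the Atiyah exact sequence);
2. additive bimodule-map splittings `j : E → J¹_E` of `π` are exactly the maps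
   `j(s) = (s, ∇_E s)` for `∇_E` a bimodule connection on `E` with generalised
   braiding `σ_E`.
Here `OE` models `Ω¹⊗_AE` (with pairing `tE`), `EO` models `E⊗_AΩ¹` (with
pairing `tEO`). -/
theorem first_jet_bundle_E
    {A Ω1 E OE EO : Type*} [Ring A]
    [AddCommGroup Ω1] [AddCommGroup E] [AddCommGroup OE] [AddCommGroup EO]
    (aΩ : A → Ω1 → Ω1) (Ωa : Ω1 → A → Ω1)
    (aE : A → E → E) (Ea : E → A → E)
    (aOE : A → OE → OE) (OEa : OE → A → OE)
    (aEO : A → EO → EO) (EOa : EO → A → EO)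
    (d : A → Ω1)
    (tE : Ω1 → E → OE)   -- ω ⊗ s
    (tEO : E → Ω1 → EO)  -- s ⊗ ω
    (sigE : EO →+ OE)
    -- `E` is an `A`-bimodule
    (hE_mul : ∀ a b s, aE a (aE b s) = aE (a * b) s) (hE_one : ∀ s, aE 1 s = s)
    (hEa_mul : ∀ s a b, Ea (Ea s a) b = Ea s (a * b)) (hEa_one : ∀ s, Ea s 1 = s)
    (hE_comm : ∀ a s b, Ea (aE a s) b = aE a (Ea s b))
    -- `Ω¹` is an `A`-bimodule (unit axioms)
    (hΩ_one : ∀ ω, aΩ 1 ω = ω) (hΩa_one : ∀ ω, Ωa ω 1 = ω)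
    -- `Ω¹⊗E` is an `A`-bimodule
    (hOE_mul : ∀ a b t, aOE a (aOE b t) = aOE (a * b) t) (hOE_one : ∀ t, aOE 1 t = t)
    (hOEa_mul : ∀ t a b, OEa (OEa t a) b = OEa t (a * b)) (hOEa_one : ∀ t, OEa t 1 = t)
    (hOE_comm : ∀ a t b, OEa (aOE a t) b = aOE a (OEa t b))
    (hOE_add : ∀ a t t', aOE a (t + t') = aOE a t + aOE a t')
    (hOEa_add : ∀ t t' a, OEa (t + t') a = OEa t a + OEa t' a)
    -- the pairings are bimodule maps (balanced over `A`)
    (htE_L : ∀ a ω s, aOE a (tE ω s) = tE (aΩ a ω) s)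
    (htE_R : ∀ ω s a, OEa (tE ω s) a = tE ω (Ea s a))
    (htE_mid : ∀ ω a s, tE (Ωa ω a) s = tE ω (aE a s))
    (htEO_L : ∀ a s ω, aEO a (tEO s ω) = tEO (aE a s) ω)
    (htEO_R : ∀ s ω a, EOa (tEO s ω) a = tEO s (Ωa ω a))
    (htEO_mid : ∀ s a ω, tEO (Ea s a) ω = tEO s (aΩ a ω))
    (htE_add : ∀ ω ω' s, tE (ω + ω') s = tE ω s + tE ω' s)
    (htEO_add : ∀ s ω ω', tEO s (ω + ω') = tEO s ω + tEO s ω')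
    -- `σ_E` is an `A`-bimodule map
    (hsigE_L : ∀ a x, sigE (aEO a x) = aOE a (sigE x))
    (hsigE_R : ∀ x a, sigE (EOa x a) = OEa (sigE x) a)
    -- `d` is a derivation
    (hd : ∀ a b, d (a * b) = aΩ a (d b) + Ωa (d a) b)
    (hd_add : ∀ a b, d (a + b) = d a + d b) :
    -- (1) the bullet actions make `J¹_E = E × OE` an `A`-bimodule …
    ((∀ (a b : A) (x : E × OE),
        ((fun (a : A) (x : E × OE) => (aE a x.1, tE (d a) x.1 + aOE a x.2)) a
          ((fun (a : A) (x : E × OE) => (aE a x.1, tE (d a) x.1 + aOE a x.2)) b x))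
          = (fun (a : A) (x : E × OE) => (aE a x.1, tE (d a) x.1 + aOE a x.2)) (a * b) x)
      ∧ (∀ x : E × OE, (aE 1 x.1, tE (d 1) x.1 + aOE 1 x.2) = x)
      ∧ (∀ (x : E × OE) (a b : A),
          ((fun (x : E × OE) (a : A) => (Ea x.1 a, sigE (tEO x.1 (d a)) + OEa x.2 a))
            ((fun (x : E × OE) (a : A) => (Ea x.1 a, sigE (tEO x.1 (d a)) + OEa x.2 a)) x a) b)
          = (fun (x : E × OE) (a : A) => (Ea x.1 a, sigE (tEO x.1 (d a)) + OEa x.2 a)) x (a * b))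
      ∧ (∀ x : E × OE, (Ea x.1 1, sigE (tEO x.1 (d 1)) + OEa x.2 1) = x)
      ∧ (∀ (a : A) (x : E × OE) (b : A),
          ((fun (x : E × OE) (b : A) => (Ea x.1 b, sigE (tEO x.1 (d b)) + OEa x.2 b))
            ((fun (a : A) (x : E × OE) => (aE a x.1, tE (d a) x.1 + aOE a x.2)) a x) b)
          = (fun (a : A) (x : E × OE) => (aE a x.1, tE (d a) x.1 + aOE a x.2)) a
              ((fun (x : E × OE) (b : A) => (Ea x.1 b, sigE (tEO x.1 (d b)) + OEa x.2 b)) x b)))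
    ∧
    -- … the projection `π(s,t) = s` is a surjective bimodule map with kernel `OE` …
    ((∀ (a : A) (x : E × OE),
        ((fun (a : A) (x : E × OE) => (aE a x.1, tE (d a) x.1 + aOE a x.2)) a x).1
          = aE a x.1)
      ∧ (∀ (x : E × OE) (a : A),
          ((fun (x : E × OE) (a : A) => (Ea x.1 a, sigE (tEO x.1 (d a)) + OEa x.2 a)) x a).1
            = Ea x.1 a)
      ∧ (∀ s : E, ∃ x : E × OE, x.1 = s)
      ∧ (∀ x : E × OE, x.1 = 0 ↔ ∃ t : OE, x = (0, t)))
    ∧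
    -- (2) bimodule splittings of `π` correspond to bimodule connections on `E`
    --     with generalised braiding `σ_E`
    (∀ j : E → E × OE,
      ((∀ s s' : E, j (s + s') = j s + j s')
        ∧ (∀ s, (j s).1 = s)
        ∧ (∀ a s, j (aE a s) = (aE a (j s).1, tE (d a) (j s).1 + aOE a (j s).2))
        ∧ (∀ s a, j (Ea s a) = (Ea (j s).1 a, sigE (tEO (j s).1 (d a)) + OEa (j s).2 a)))
      ↔ ∃ nabE : E → OE,
          (∀ s, j s = (s, nabE s))
          ∧ (∀ s s' : E, nabE (s + s') = nabE s + nabE s')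
          ∧ (∀ a s, nabE (aE a s) = tE (d a) s + aOE a (nabE s))
          ∧ (∀ s a, nabE (Ea s a) = OEa (nabE s) a + sigE (tEO s (d a)))) := by
  have hd1 : d 1 = 0 := by
    have h := hd 1 1
    rw [one_mul, hΩ_one, hΩa_one] at h
    have : d 1 + d 1 = d 1 + 0 := by rw [add_zero]; exact h.symm
    exact (add_left_cancel this)
  have htE0 : ∀ s, tE 0 s = 0 := by
    intro s
    have h := htE_add 0 0 s
    rw [add_zero] at h
    have : tE 0 s + tE 0 s = tE 0 s + 0 := by rw [add_zero]; exact h.symm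
    exact (add_left_cancel this)
  have htEO0 : ∀ s, tEO s 0 = 0 := by
    intro s
    have h := htEO_add s 0 0
    rw [add_zero] at h
    have : tEO s 0 + tEO s 0 = tEO s 0 + 0 := by rw [add_zero]; exact h.symm
    exact (add_left_cancel this)
  refine ⟨⟨?_, ?_, ?_, ?_, ?_⟩, ⟨?_, ?_, ?_, ?_⟩, ?_⟩
  · -- left action multiplicativity
    intro a b x
    simp only []
    refine Prod.ext (hE_mul a b x.1) ?_
    simp only []
    rw [hd a b, htE_add, hOE_add, htE_L, hOE_mul, htE_mid]
    abel
  · intro x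
    rw [hd1, htE0, hE_one, hOE_one, zero_add]
  · -- right action multiplicativity
    intro x a b
    refine Prod.ext (hEa_mul x.1 a b) ?_
    show sigE (tEO (Ea x.1 a) (d b)) + OEa (sigE (tEO x.1 (d a)) + OEa x.2 a) b
        = sigE (tEO x.1 (d (a * b))) + OEa x.2 (a * b)
    rw [hd a b, htEO_add, map_add, htEO_mid, hOEa_add, ← hsigE_R, htEO_R, hOEa_mul]
    abel
  · intro x
    rw [hd1, htEO0, map_zero, hEa_one, hOEa_one, zero_add]
  · -- compatibility of the two actions
    intro a x b
    refine Prod.ext (hE_comm a x.1 b) ?_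
    simp only []
    rw [← htEO_L, hsigE_L, hOEa_add, hOE_comm, htE_R, hOE_add]
    abel
  · intro a x; rfl
  · intro x a; rfl
  · intro s; exact ⟨(s, 0), rfl⟩
  · intro x
    constructor
    · intro h; exact ⟨x.2, Prod.ext h rfl⟩
    · rintro ⟨t, rfl⟩; rfl
  · -- splittings ↔ connections
    intro j
    constructor
    · rintro ⟨hadd, hπ, hL, hR⟩
      refine ⟨fun s => (j s).2, ?_, ?_, ?_, ?_⟩
      · intro s; exact Prod.ext (hπ s) rfl
      · intro s s'
        show (j (s + s')).2 = (j s).2 + (j s').2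
        rw [hadd]; rfl
      · intro a s
        show (j (aE a s)).2 = tE (d a) s + aOE a (j s).2
        have := congrArg Prod.snd (hL a s)
        simpa [hπ s] using this
      · intro s a
        show (j (Ea s a)).2 = OEa (j s).2 a + sigE (tEO s (d a))
        have := congrArg Prod.snd (hR s a)
        rw [hπ s] at this
        simp only [] at this
        rw [this]; abel
    · rintro ⟨nabE, hj, hadd, hL, hR⟩
      refine ⟨?_, ?_, ?_, ?_⟩
      · intro s s'
        rw [hj, hj, hj, hadd]; rfl
      · intro s; rw [hj]
      · intro a s
        rw [hj, hj]
        exact Prod.ext rfl (hL a s)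
      · intro s a
        rw [hj, hj]
        refine Prod.ext rfl ?_
        show nabE (Ea s a) = sigE (tEO s (d a)) + OEa (nabE s) a
        rw [hR]; abel
end
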